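/- Let R be an integral domain and f ∈ R nonzero non-invertible, S = R[u,v]/(uv - f). Every ascending chain of principal ideals in R terminates if every ascending chain of principal ideals in S terminates. -/

import Mathlib

open MvPolynomial

/-- The suspension ring `S = R[u,v]/(uv - f)`. -/
abbrev Susp (R : Type*) [CommRing R] (f : R) : Type _ :=
  MvPolynomial (Fin 2) R ⧸
    Ideal.span {(X 0 * X 1 - C f : MvPolynomial (Fin 2) R)}

/-- The image of the variable `u` in `S`. -/
noncomputable abbrev suspU (R : Type*) [CommRing R] (f : R) : Susp R f :=
  Ideal.Quotient.mk _ (X 0)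

/-- The image of the variable `v` in `S`. -/
noncomputable abbrev suspV (R : Type*) [CommRing R] (f : R) : Susp R f :=
  Ideal.Quotient.mk _ (X 1)

def PrincipalChainsStabilize (R : Type*) [CommSemiring R] : Prop :=
  ∀ a : ℕ → R,
    (∀ n, Ideal.span {a n} ≤ Ideal.span {a (n + 1)}) →
    ∃ N, ∀ n, N ≤ n → Ideal.span {a n} = Ideal.span {a N}

theorem PrincipalChainsStabilize.of_leftInverse {R S : Type*} [CommSemiring R] [CommSemiring S]
    (φ : R →+* S) (ψ : S →+* R) (hψ : Function.LeftInverse ψ φ)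
    (hS : PrincipalChainsStabilize S) : PrincipalChainsStabilize R := by
  intro a ha
  have hφa : ∀ n, Ideal.span {φ (a n)} ≤ Ideal.span {φ (a (n + 1))} := fun n =>
    Ideal.span_singleton_le_span_singleton.mpr
      (map_dvd φ (Ideal.span_singleton_le_span_singleton.mp (ha n)))
  obtain ⟨N, hN⟩ := hS (fun n => φ (a n)) hφa
  have hspan : ∀ n, Ideal.span {a n} = (Ideal.span {φ (a n)}).map ψ := fun n => by
    rw [Ideal.map_span, Set.image_singleton, hψ]
  exact ⟨N, fun n hn => by rw [hspan, hspan, hN n hn]⟩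

/-- `u ↦ f`, `v ↦ 1` kills `uv - f`, so `R` is a retract of `R[u,v]/(uv - f)`. -/
noncomputable def suspRetraction (R : Type*) [CommRing R] (f : R) : Susp R f →ₐ[R] R :=
  Ideal.Quotient.liftₐ _ (aeval ![f, 1]) fun p hp => by
    obtain ⟨q, rfl⟩ := Ideal.mem_span_singleton'.mp hp
    simp

theorem accp_of_accp_suspension_general (R : Type*) [CommRing R] (f : R)
    (hS : ∀ c : ℕ → Susp R f,
      (∀ n, Ideal.span {c n} ≤ Ideal.span {c (n + 1)}) →
      ∃ N, ∀ n, N ≤ n → Ideal.span {c n} = Ideal.span {c N}) :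
    ∀ a : ℕ → R,
      (∀ n, Ideal.span {a n} ≤ Ideal.span {a (n + 1)}) →
      ∃ N, ∀ n, N ≤ n → Ideal.span {a n} = Ideal.span {a N} :=
  PrincipalChainsStabilize.of_leftInverse (algebraMap R (Susp R f))
    (suspRetraction R f : Susp R f →+* R) (suspRetraction R f).commutes hS

/-- If every ascending chain of principal ideals in `S = R[u,v]/(uv - f)`
terminates, then every ascending chain of principal ideals in `R` terminates. -/
theorem accp_of_accp_suspension (R : Type*) [CommRing R] [IsDomain R] (f : R)
    (hf0 : f ≠ 0) (hf : ¬ IsUnit f)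
    (hS : ∀ c : ℕ → Susp R f,
      (∀ n, Ideal.span {c n} ≤ Ideal.span {c (n + 1)}) →
      ∃ N, ∀ n, N ≤ n → Ideal.span {c n} = Ideal.span {c N}) :
    ∀ a : ℕ → R,
      (∀ n, Ideal.span {a n} ≤ Ideal.span {a (n + 1)}) →
      ∃ N, ∀ n, N ≤ n → Ideal.span {a n} = Ideal.span {a N} :=
  accp_of_accp_suspension_general R f hS
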